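/- For fixed k ≥ 1, fixed ℓ ≥ 0, and fixed φ > 0, the ratio H_ℓ(n) = φ^ℓ · S(n-ℓ, k, φ)/S(n, k, φ) converges to (φ/(k + φ))^ℓ as n → ∞. -/

import Mathlib

open Finset Filter Real

/-- Central Stirling numbers of the second kind. -/
def stirling2 : ℕ → ℕ → ℕ
  | 0, 0 => 1
  | 0, _ + 1 => 0
  | _ + 1, 0 => 0
  | n + 1, k + 1 => (k + 1) * stirling2 n (k + 1) + stirling2 n k

/-- Noncentral Stirling numbers of the second kind. -/
noncomputable def ncS (n k : ℕ) (φ : ℝ) : ℝ :=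
  ∑ j ∈ Finset.range (n + 1), (n.choose j : ℝ) * φ ^ (n - j) * (stirling2 j k : ℝ)

/-- Spillage mass function. -/
noncomputable def spillage (r n k : ℕ) (φ : ℝ) : ℝ :=
  (n.choose (k + r) : ℝ) * φ ^ (n - k - r) * (stirling2 (k + r) k : ℝ) / ncS n k φ

/-!
Pascal's rule gives the recursion `S(n+1, k+1, φ) = (k+1+φ) S(n, k+1, φ) + S(n, k, φ)`. By induction
on `k`, `S(n+1, k, φ) / S(n, k, φ) → k + φ`: the lower term `S(n, k, φ)` grows at rate `k + φ`, below
the rate `k + 1 + φ` of the recursion, so its ratio to `S(n, k+1, φ)` decays geometrically and the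
ratio test makes it vanish. Chaining `ℓ` consecutive ratios gives
`S(n-ℓ, k, φ) / S(n, k, φ) → (k + φ)⁻¹ ^ ℓ`.
-/

open scoped Topology

lemma stirling2_eq_zero_of_lt : ∀ {n k : ℕ}, n < k → stirling2 n k = 0
  | 0, _ + 1, _ => rfl
  | n + 1, k + 1, h => by
    simp [stirling2, stirling2_eq_zero_of_lt (show n < k + 1 by omega),
      stirling2_eq_zero_of_lt (show n < k by omega)]

lemma stirling2_self (k : ℕ) : stirling2 k k = 1 := by
  induction k with
  | zero => rfl
  | succ k ih => simp [stirling2, ih, stirling2_eq_zero_of_lt k.lt_succ_self]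

lemma ncS_pos {n k : ℕ} (hkn : k ≤ n) {φ : ℝ} (hφ : 0 < φ) : 0 < ncS n k φ := by
  refine Finset.sum_pos' (fun _ _ => by positivity) ⟨k, Finset.mem_range.mpr (by omega), ?_⟩
  have : (0 : ℝ) < n.choose k := by exact_mod_cast Nat.choose_pos hkn
  rw [stirling2_self]
  positivity

lemma eventually_ncS_pos (k : ℕ) {φ : ℝ} (hφ : 0 < φ) : ∀ᶠ n in atTop, 0 < ncS n k φ :=
  eventually_atTop.2 ⟨k, fun _ hn => ncS_pos hn hφ⟩

lemma ncS_zero_right (n : ℕ) (φ : ℝ) : ncS n 0 φ = φ ^ n := by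
  rw [ncS, Finset.sum_range_succ']
  simp [stirling2]

lemma ncS_eq_sum_antidiagonal (n k : ℕ) (φ : ℝ) :
    ncS n k φ = ∑ ij ∈ antidiagonal n, (n.choose ij.1 : ℝ) * (φ ^ ij.2 * stirling2 ij.1 k) := by
  rw [ncS, Finset.Nat.sum_antidiagonal_eq_sum_range_succ
    (fun i j => (n.choose i : ℝ) * (φ ^ j * stirling2 i k))]
  simp only [mul_assoc]

lemma ncS_succ_succ (n k : ℕ) (φ : ℝ) :
    ncS (n + 1) (k + 1) φ = ((k + 1 : ℝ) + φ) * ncS n (k + 1) φ + ncS n k φ := by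
  rw [ncS_eq_sum_antidiagonal, Finset.sum_antidiagonal_choose_succ_mul
    (fun i j => φ ^ j * (stirling2 i (k + 1) : ℝ)), ncS_eq_sum_antidiagonal,
    ncS_eq_sum_antidiagonal]
  simp only [stirling2, Finset.mul_sum, ← Finset.sum_add_distrib]
  refine Finset.sum_congr rfl fun ij hij => ?_
  rw [Nat.choose_symm_of_eq_add (Finset.HasAntidiagonal.mem_antidiagonal.mp hij).symm]
  push_cast
  ring

lemma tendsto_div_zero_of_succ_eq_mul_add {a b : ℕ → ℝ} {c d : ℝ} (hcd : c < d)
    (ha : ∀ᶠ n in atTop, 0 < a n) (hb : ∀ᶠ n in atTop, 0 < b n)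
    (hrec : ∀ n, a (n + 1) = d * a n + b n)
    (hlim : Tendsto (fun n => b (n + 1) / b n) atTop (𝓝 c)) :
    Tendsto (fun n => b n / a n) atTop (𝓝 0) := by
  have ha' : ∀ᶠ n in atTop, 0 < a (n + 1) := tendsto_add_atTop_nat 1 |>.eventually ha
  have hb' : ∀ᶠ n in atTop, 0 < b (n + 1) := tendsto_add_atTop_nat 1 |>.eventually hb
  have hc : 0 ≤ c := ge_of_tendsto hlim <| by
    filter_upwards [hb, hb'] with n hn hn' using by positivity
  obtain ⟨q, hcq, hqd⟩ := exists_between hcd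
  have hq : 0 < q := hc.trans_lt hcq
  have hd : 0 < d := hq.trans hqd
  refine Summable.tendsto_atTop_zero <|
    summable_of_ratio_norm_eventually_le (r := q / d) ((div_lt_one hd).2 hqd) ?_
  filter_upwards [ha, ha', hb, hb', hlim.eventually_lt_const hcq] with n han han' hbn hbn' hratio
  have hbq : b (n + 1) ≤ q * b n := ((div_lt_iff₀ hbn).1 hratio).le
  have hda : d * a n ≤ a (n + 1) := by rw [hrec]; linarith
  rw [Real.norm_of_nonneg (by positivity), Real.norm_of_nonneg (by positivity)]
  calc b (n + 1) / a (n + 1) ≤ q * b n / (d * a n) := by gcongr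
    _ = q / d * (b n / a n) := by field_simp

lemma tendsto_succ_div_of_succ_eq_mul_add {a b : ℕ → ℝ} {c d : ℝ} (hcd : c < d)
    (ha : ∀ᶠ n in atTop, 0 < a n) (hb : ∀ᶠ n in atTop, 0 < b n)
    (hrec : ∀ n, a (n + 1) = d * a n + b n)
    (hlim : Tendsto (fun n => b (n + 1) / b n) atTop (𝓝 c)) :
    Tendsto (fun n => a (n + 1) / a n) atTop (𝓝 d) := by
  have h := (tendsto_div_zero_of_succ_eq_mul_add hcd ha hb hrec hlim).const_add d
  rw [add_zero] at h
  refine h.congr' ?_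
  filter_upwards [ha] with n han
  rw [hrec]
  field_simp

lemma tendsto_ncS_succ_div {φ : ℝ} (hφ : 0 < φ) (k : ℕ) :
    Tendsto (fun n => ncS (n + 1) k φ / ncS n k φ) atTop (𝓝 (k + φ)) := by
  induction k with
  | zero =>
    simp only [ncS_zero_right, pow_succ, CharP.cast_eq_zero, zero_add]
    refine tendsto_const_nhds.congr fun n => ?_
    field_simp
  | succ k ih =>
    push_cast
    exact tendsto_succ_div_of_succ_eq_mul_add (a := fun n => ncS n (k + 1) φ)
      (b := fun n => ncS n k φ) (by linarith) (eventually_ncS_pos (k + 1) hφ)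
      (eventually_ncS_pos k hφ)
      (fun n => ncS_succ_succ n k φ) ih

lemma tendsto_sub_div_of_tendsto_succ_div {𝕜 : Type*} [NormedField 𝕜] {u : ℕ → 𝕜} {L : 𝕜}
    (hL : L ≠ 0) (hu : ∀ᶠ n in atTop, u n ≠ 0)
    (h : Tendsto (fun n => u (n + 1) / u n) atTop (𝓝 L)) (ℓ : ℕ) :
    Tendsto (fun n => u (n - ℓ) / u n) atTop (𝓝 (L⁻¹ ^ ℓ)) := by
  induction ℓ with
  | zero =>
    refine tendsto_const_nhds.congr' ?_
    filter_upwards [hu] with n hn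
    rw [pow_zero, Nat.sub_zero, div_self hn]
  | succ ℓ ih =>
    have hstep : Tendsto (fun n => u (n - (ℓ + 1)) / u (n - ℓ)) atTop (𝓝 L⁻¹) := by
      refine ((h.inv₀ hL).comp (tendsto_sub_atTop_nat (ℓ + 1))).congr' ?_
      filter_upwards [eventually_ge_atTop (ℓ + 1)] with n hn
      simp [show n - (ℓ + 1) + 1 = n - ℓ by omega]
    rw [pow_succ']
    refine (hstep.mul ih).congr' ?_
    filter_upwards [tendsto_sub_atTop_nat ℓ |>.eventually hu] with n hn
    field_simp

theorem stmt10_general (k ℓ : ℕ) (φ : ℝ) (hφ : 0 < φ) :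
    Filter.Tendsto (fun n : ℕ => φ ^ ℓ * ncS (n - ℓ) k φ / ncS n k φ)
      Filter.atTop (nhds ((φ / ((k : ℝ) + φ)) ^ ℓ)) := by
  have hshift := tendsto_sub_div_of_tendsto_succ_div (by positivity)
    ((eventually_ncS_pos k hφ).mono fun _ h => h.ne') (tendsto_ncS_succ_div hφ k) ℓ
  rw [div_pow, div_eq_mul_inv, ← inv_pow]
  simpa only [mul_div_assoc] using hshift.const_mul (φ ^ ℓ)

theorem stmt10 (k ℓ : ℕ) (hk : 1 ≤ k) (φ : ℝ) (hφ : 0 < φ) :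
    Filter.Tendsto (fun n : ℕ => φ ^ ℓ * ncS (n - ℓ) k φ / ncS n k φ)
      Filter.atTop (nhds ((φ / ((k : ℝ) + φ)) ^ ℓ)) :=
  stmt10_general k ℓ φ hφ
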